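/- arXiv:1808.06176 — 5 statements merged into one kernel-verified Lean document; each statement's English description precedes it below -/
import Mathlib

section
/- Let X and Y be real Hilbert spaces, let W : X → Y be a bounded linear operator with adjoint W*, and suppose there is a constant C > 0 such that ‖f‖_X ≤ C ‖W f‖_Y for all f ∈ X. Fix g^δ ∈ Y and let f† be the unique minimizer of Φ(f) = ½ ‖W f − g^δ‖²_Y. Let 0 < γ < 2/‖W*W‖ and define the Landweber iteration by f_0 = 0 and f_{k+1} = f_k − γ W*(W f_k − g^δ). Then a := max(|1 − γ C⁻²|, |1 − γ ‖W‖²|) satisfies a < 1 and ‖f† − f_k‖_X ≤ a^k ‖f†‖_X for all k ∈ ℕ. -/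
/-!
The minimiser `f†` satisfies the normal equation `W* (W f† - g) = 0` (its residual is orthogonal
to the range of `W`), so the error `f† - f_k` is propagated by the self-adjoint operator
`1 - γ W* W`. The quadratic form of that operator, `‖x‖² - γ ‖W x‖²`, lies between
`(1 - γ ‖W‖²) ‖x‖²` and `(1 - γ C⁻²) ‖x‖²`, and the norm of a self-adjoint operator is the supremum
of its Rayleigh quotient, so the operator has norm at most `a`.
-/

section

open ContinuousLinearMap InnerProductSpace

variable {X Y : Type*} [NormedAddCommGroup X] [InnerProductSpace ℝ X]
  [NormedAddCommGroup Y] [InnerProductSpace ℝ Y]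

theorem ContinuousLinearMap.norm_le_max_abs_of_inner_self_bounds {T : X →L[ℝ] X}
    (hT : (T : X →ₗ[ℝ] X).IsSymmetric) {lo hi : ℝ}
    (hlo : ∀ x, lo * ‖x‖ ^ 2 ≤ ⟪T x, x⟫_ℝ) (hhi : ∀ x, ⟪T x, x⟫_ℝ ≤ hi * ‖x‖ ^ 2) :
    ‖T‖ ≤ max |lo| |hi| := by
  rw [T.norm_eq_iSup_rayleighQuotient hT]
  refine ciSup_le fun x => ?_
  rcases eq_or_ne x 0 with rfl | hx
  · simp
  have hx2 : 0 < ‖x‖ ^ 2 := by positivity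
  rw [rayleighQuotient, reApplyInnerSelf_apply, RCLike.re_to_real, abs_div, abs_sq,
    div_le_iff₀ hx2, abs_le]
  constructor
  · nlinarith [hlo x, neg_abs_le lo, le_max_left |lo| |hi|]
  · nlinarith [hhi x, le_abs_self hi, le_max_right |lo| |hi|]

theorem max_abs_one_sub_mul_lt_one {γ m M : ℝ} (hγ : 0 < γ) (hm : 0 < m) (hmM : m ≤ M)
    (hM : γ * M < 2) : max |1 - γ * m| |1 - γ * M| < 1 := by
  have : γ * m ≤ γ * M := by gcongr
  rw [max_lt_iff, abs_lt, abs_lt]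
  refine ⟨⟨?_, ?_⟩, ?_, ?_⟩ <;> nlinarith

theorem ContinuousLinearMap.inv_le_opNorm_of_norm_le_mul_norm {W : X →L[ℝ] Y} {C : ℝ}
    (hC : 0 < C) (hW : W ≠ 0) (h : ∀ x, ‖x‖ ≤ C * ‖W x‖) : C⁻¹ ≤ ‖W‖ := by
  obtain ⟨x, hx⟩ : ∃ x, W x ≠ 0 := by
    by_contra! hW0
    exact hW (ext hW0)
  have hx0 : 0 < ‖x‖ := norm_pos_iff.2 fun h0 => hx (by simp [h0])
  rw [inv_le_iff_one_le_mul₀ hC]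
  refine le_of_mul_le_mul_right ?_ hx0
  calc 1 * ‖x‖ ≤ C * ‖W x‖ := by simpa using h x
    _ ≤ C * (‖W‖ * ‖x‖) := by gcongr; exact W.le_opNorm x
    _ = ‖W‖ * C * ‖x‖ := by ring

variable [CompleteSpace X] [CompleteSpace Y]

theorem ContinuousLinearMap.adjoint_apply_sub_eq_zero_of_forall_norm_le
    {W : X →L[ℝ] Y} {g : Y} {x : X}
    (hx : ∀ y, ‖W x - g‖ ≤ ‖W y - g‖) : adjoint W (W x - g) = 0 := by
  have hmin : ‖g - W x‖ = ⨅ w : (W.range : Set Y), ‖g - w‖ := by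
    refine le_antisymm (le_ciInf ?_) (ciInf_le ⟨0, ?_⟩ (⟨W x, x, rfl⟩ : (W.range : Set Y)))
    · rintro ⟨_, y, rfl⟩
      simpa [norm_sub_rev] using hx y
    · rintro _ ⟨w, rfl⟩
      positivity
  have horth : g - W x ∈ W.rangeᗮ :=
    (Submodule.mem_orthogonal' _ _).2 ((W.range.norm_eq_iInf_iff_real_inner_eq_zero
      (LinearMap.mem_range_self (W : X →ₗ[ℝ] Y) x)).1 hmin)
  rw [W.orthogonal_range, LinearMap.mem_ker] at horth
  rw [← neg_sub, map_neg, neg_eq_zero]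
  exact horth

noncomputable def landweberOp (W : X →L[ℝ] Y) (γ : ℝ) : X →L[ℝ] X := 1 - γ • (adjoint W ∘L W)

variable (W : X →L[ℝ] Y)

@[simp]
theorem landweberOp_apply (γ : ℝ) (x : X) : landweberOp W γ x = x - γ • adjoint W (W x) := rfl

theorem isSelfAdjoint_landweberOp (γ : ℝ) : IsSelfAdjoint (landweberOp W γ) :=
  (IsSelfAdjoint.one _).sub
    ((IsSelfAdjoint.all γ).smul (isPositive_adjoint_comp_self W).isSelfAdjoint)

theorem inner_landweberOp_apply_self (γ : ℝ) (x : X) :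
    ⟪landweberOp W γ x, x⟫_ℝ = ‖x‖ ^ 2 - γ * ‖W x‖ ^ 2 := by
  rw [landweberOp_apply, inner_sub_left, real_inner_smul_left, adjoint_inner_left,
    real_inner_self_eq_norm_sq, real_inner_self_eq_norm_sq]

theorem norm_landweberOp_le {γ m : ℝ} (hγ : 0 ≤ γ) (hm : ∀ x, m * ‖x‖ ^ 2 ≤ ‖W x‖ ^ 2) :
    ‖landweberOp W γ‖ ≤ max |1 - γ * m| |1 - γ * ‖W‖ ^ 2| := by
  rw [max_comm]
  refine norm_le_max_abs_of_inner_self_bounds (isSelfAdjoint_landweberOp W γ).isSymmetric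
    (fun x => ?_) (fun x => ?_) <;> rw [inner_landweberOp_apply_self]
  · have : ‖W x‖ ^ 2 ≤ ‖W‖ ^ 2 * ‖x‖ ^ 2 := by
      rw [← mul_pow]; gcongr; exact W.le_opNorm x
    nlinarith
  · nlinarith [hm x]

theorem sub_landweber_update_eq_landweberOp_apply (γ : ℝ) {g : Y} {x : X}
    (hx : adjoint W (W x - g) = 0) (f : X) :
    x - (f - γ • adjoint W (W f - g)) = landweberOp W γ (x - f) := by
  have : adjoint W (W f - g) = -adjoint W (W (x - f)) := by
    rw [show W f - g = (W x - g) - W (x - f) by rw [map_sub]; abel, map_sub, hx, zero_sub]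
  rw [landweberOp_apply, this, smul_neg]
  abel

end

open ContinuousLinearMap

/-- linear convergence of the Landweber iteration, well-posed case.
Let `X, Y` be real Hilbert spaces, `W : X → Y` bounded linear with adjoint `W*`, and
suppose `‖f‖ ≤ C ‖W f‖` for all `f` (`C > 0`). Fix `g^δ ∈ Y`, let `f†` be the unique
minimizer of `Φ(f) = ½‖W f − g^δ‖²`, let `0 < γ < 2/‖W*W‖`, and define the Landweber
iteration `f_0 = 0`, `f_{k+1} = f_k − γ W*(W f_k − g^δ)`. Then
`a := max (|1 − γ C⁻²|) (|1 − γ ‖W‖²|)` satisfies `a < 1` and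
`‖f† − f_k‖ ≤ a^k ‖f†‖` for all `k ∈ ℕ`. -/
theorem stmt5
    {X Y : Type*}
    [NormedAddCommGroup X] [InnerProductSpace ℝ X] [CompleteSpace X]
    [NormedAddCommGroup Y] [InnerProductSpace ℝ Y] [CompleteSpace Y]
    (W : X →L[ℝ] Y)
    (C : ℝ) (hC : 0 < C)
    (hstab : ∀ f : X, ‖f‖ ≤ C * ‖W f‖)
    (gδ : Y) (fdag : X)
    (hmin : ∀ h : X, (1 / 2) * ‖W fdag - gδ‖ ^ 2 ≤ (1 / 2) * ‖W h - gδ‖ ^ 2)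
    (γ : ℝ) (hγ0 : 0 < γ)
    (hγ : γ < 2 / ‖(ContinuousLinearMap.adjoint W).comp W‖)
    (fs : ℕ → X) (hfs0 : fs 0 = 0)
    (hfs : ∀ k : ℕ,
      fs (k + 1) = fs k - γ • ContinuousLinearMap.adjoint W (W (fs k) - gδ)) :
    max |1 - γ * C⁻¹ ^ 2| |1 - γ * ‖W‖ ^ 2| < 1 ∧
      ∀ k : ℕ,
        ‖fdag - fs k‖ ≤ (max |1 - γ * C⁻¹ ^ 2| |1 - γ * ‖W‖ ^ 2|) ^ k * ‖fdag‖ := by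
  rw [norm_adjoint_comp_self, ← sq] at hγ
  have hW : 0 < ‖W‖ := by
    by_contra! hW
    rw [le_antisymm hW (norm_nonneg W)] at hγ
    norm_num at hγ
    linarith
  have hγW : γ * ‖W‖ ^ 2 < 2 := (lt_div_iff₀ (by positivity)).1 hγ
  have hCW : C⁻¹ ^ 2 ≤ ‖W‖ ^ 2 := by
    gcongr
    exact inv_le_opNorm_of_norm_le_mul_norm hC (norm_pos_iff.1 hW) hstab
  set a := max |1 - γ * C⁻¹ ^ 2| |1 - γ * ‖W‖ ^ 2|
  have hnormal : adjoint W (W fdag - gδ) = 0 :=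
    adjoint_apply_sub_eq_zero_of_forall_norm_le fun h =>
      (pow_le_pow_iff_left₀ (norm_nonneg _) (norm_nonneg _) two_ne_zero).1 (by linarith [hmin h])
  have hS : ‖landweberOp W γ‖ ≤ a := norm_landweberOp_le W hγ0.le fun x => by
    rw [← mul_pow]
    gcongr
    exact (inv_mul_le_iff₀ hC).2 (hstab x)
  refine ⟨max_abs_one_sub_mul_lt_one hγ0 (by positivity) hCW hγW, fun k => ?_⟩
  induction k with
  | zero => simp [hfs0]
  | succ k ih =>
    calc ‖fdag - fs (k + 1)‖ = ‖landweberOp W γ (fdag - fs k)‖ := by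
          rw [hfs k, sub_landweber_update_eq_landweberOp_apply W γ hnormal]
      _ ≤ a * ‖fdag - fs k‖ := le_of_opNorm_le _ hS _
      _ ≤ a * (a ^ k * ‖fdag‖) := by gcongr
      _ = a ^ (k + 1) * ‖fdag‖ := by ring
end

section
/- Let X and Y be real Hilbert spaces, let W : X → Y be a bounded linear operator with adjoint W*, and suppose there is a constant C > 0 such that ‖f‖_X ≤ C ‖W f‖_Y for all f ∈ X. Fix g^δ ∈ Y and let f† be the unique minimizer of Φ(f) = ½ ‖W f − g^δ‖²_Y. Define the steepest descent iteration by f_0 = 0 and, for k ≥ 0, s_k = W*(W f_k − g^δ), f_{k+1} = f_k − γ_k s_k with γ_k = ‖s_k‖²_X / ‖W s_k‖²_Y when s_k ≠ 0 and f_{k+1} = f_k when s_k = 0. Then there exist constants a ∈ [0, 1) and C'' ≥ 0 such that ‖f† − f_k‖_X ≤ C'' a^k ‖f†‖_X for all k ∈ ℕ. -/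
/-!
Since `f†` minimizes the residual, `W*(W f† - g^δ) = 0`, so the error `e_k = f_k - f†` follows
steepest descent for `W e = 0` and `s_k = W*W e_k`. Exact line search lowers `‖W e‖²` by
`‖s‖⁴ / ‖W s‖² ≥ ‖s‖² / ‖W‖²`, and `‖W e‖² = ⟪e, s⟫ ≤ C ‖W e‖ ‖s‖` gives `‖W e‖ ≤ C ‖s‖`.
Hence `‖W e_{k+1}‖² ≤ (1 - 1 / (C ‖W‖)²) ‖W e_k‖²`, and the stability estimate
`‖e‖ ≤ C ‖W e‖` transfers this geometric decay of the residual to the error.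
-/

open RealInnerProductSpace
open scoped InnerProduct

theorem norm_sq_le_opNorm_sq_mul_lineSearchDecrease {E F : Type*} [SeminormedAddCommGroup E]
    [NormedSpace ℝ E] [NormedAddCommGroup F] [NormedSpace ℝ F] (W : E →L[ℝ] F) {s : E}
    (hs : W s = 0 → s = 0) : ‖s‖ ^ 2 ≤ ‖W‖ ^ 2 * (‖s‖ ^ 2 * (‖s‖ ^ 2 / ‖W s‖ ^ 2)) := by
  rcases eq_or_ne (W s) 0 with h | h
  · simp [hs h]
  have hWs : 0 < ‖W s‖ ^ 2 := by positivity
  rw [mul_div_assoc', mul_div_assoc', le_div_iff₀ hWs]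
  calc ‖s‖ ^ 2 * ‖W s‖ ^ 2 ≤ ‖s‖ ^ 2 * (‖W‖ * ‖s‖) ^ 2 := by gcongr; exact W.le_opNorm s
    _ = ‖W‖ ^ 2 * (‖s‖ ^ 2 * ‖s‖ ^ 2) := by ring

/-- Taking the maximum with `1` keeps the rate below `1` also when `C * ‖W‖ = 0`. -/
noncomputable def steepestDescentRate {E F : Type*} [SeminormedAddCommGroup E]
    [NormedSpace ℝ E] [SeminormedAddCommGroup F] [NormedSpace ℝ F] (C : ℝ) (W : E →L[ℝ] F) : ℝ :=
  √(1 - 1 / max (C * ‖W‖) 1 ^ 2)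

theorem steepestDescentRate_lt_one {E F : Type*} [SeminormedAddCommGroup E]
    [NormedSpace ℝ E] [SeminormedAddCommGroup F] [NormedSpace ℝ F] (C : ℝ) (W : E →L[ℝ] F) :
    steepestDescentRate C W < 1 := by
  rw [steepestDescentRate, Real.sqrt_lt' one_pos, one_pow, sub_lt_self_iff]
  have : 0 < max (C * ‖W‖) 1 := lt_max_of_lt_right one_pos
  positivity

section SteepestDescent

variable {X Y : Type*} [NormedAddCommGroup X] [InnerProductSpace ℝ X] [CompleteSpace X]
  [NormedAddCommGroup Y] [InnerProductSpace ℝ Y] [CompleteSpace Y] {W : X →L[ℝ] Y}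

theorem adjoint_apply_sub_eq_zero_of_forall_norm_sq_le {f : X} {g : Y}
    (hmin : ∀ h : X, ‖W f - g‖ ^ 2 ≤ ‖W h - g‖ ^ 2) : (W†) (W f - g) = 0 := by
  have horth : ∀ v : X, ⟪W f - g, W v⟫ = 0 := by
    intro v
    have hquad : ∀ t : ℝ, 0 ≤ ‖W v‖ ^ 2 * (t * t) + 2 * ⟪W f - g, W v⟫ * t + 0 := by
      intro t
      have h := hmin (f + t • v)
      rw [map_add, map_smul, add_sub_right_comm, norm_add_sq_real, inner_smul_right, norm_smul,
        Real.norm_eq_abs, mul_pow, sq_abs] at h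
      linarith
    have hdisc := discrim_le_zero hquad
    rw [discrim] at hdisc
    nlinarith [sq_nonneg ⟪W f - g, W v⟫]
  rw [← inner_self_eq_zero (𝕜 := ℝ), ContinuousLinearMap.adjoint_inner_left, horth]

noncomputable def steepestDescentStep (W : X →L[ℝ] Y) (e : X) : X :=
  e - (‖(W†) (W e)‖ ^ 2 / ‖W ((W†) (W e))‖ ^ 2) • (W†) (W e)

theorem norm_sq_apply_steepestDescentStep (e : X) :
    ‖W (steepestDescentStep W e)‖ ^ 2 =
      ‖W e‖ ^ 2 - ‖(W†) (W e)‖ ^ 2 * (‖(W†) (W e)‖ ^ 2 / ‖W ((W†) (W e))‖ ^ 2) := by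
  set s := (W†) (W e)
  set γ := ‖s‖ ^ 2 / ‖W s‖ ^ 2
  have hinner : ⟪W e, W s⟫ = ‖s‖ ^ 2 := by
    rw [← ContinuousLinearMap.adjoint_inner_left, real_inner_self_eq_norm_sq]
  have hγ : γ ^ 2 * ‖W s‖ ^ 2 = γ * ‖s‖ ^ 2 := by
    rcases eq_or_ne ‖W s‖ 0 with h | h
    · simp [γ, h]
    · rw [sq γ, mul_assoc, div_mul_cancel₀ _ (pow_ne_zero 2 h)]
  rw [steepestDescentStep, map_sub, map_smul, norm_sub_sq_real, inner_smul_right, hinner,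
    norm_smul, Real.norm_eq_abs, mul_pow, sq_abs, hγ]
  ring

theorem norm_apply_le_mul_norm_adjoint_apply {C : ℝ} (hC : 0 ≤ C)
    (hstab : ∀ f : X, ‖f‖ ≤ C * ‖W f‖) (e : X) : ‖W e‖ ≤ C * ‖(W†) (W e)‖ := by
  rcases (norm_nonneg (W e)).eq_or_lt with h | h
  · rw [← h]; positivity
  refine le_of_mul_le_mul_right ?_ h
  calc ‖W e‖ * ‖W e‖ = ⟪e, (W†) (W e)⟫ := by
        rw [ContinuousLinearMap.adjoint_inner_right, real_inner_self_eq_norm_mul_norm]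
    _ ≤ ‖e‖ * ‖(W†) (W e)‖ := real_inner_le_norm _ _
    _ ≤ C * ‖W e‖ * ‖(W†) (W e)‖ := by gcongr; exact hstab e
    _ = C * ‖(W†) (W e)‖ * ‖W e‖ := by ring

theorem norm_sq_apply_le_mul_sub_norm_sq_apply_steepestDescentStep {C : ℝ} (hC : 0 ≤ C)
    (hstab : ∀ f : X, ‖f‖ ≤ C * ‖W f‖) (e : X) :
    ‖W e‖ ^ 2 ≤ (C * ‖W‖) ^ 2 * (‖W e‖ ^ 2 - ‖W (steepestDescentStep W e)‖ ^ 2) := by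
  have hinj : ∀ f : X, W f = 0 → f = 0 := fun f hf =>
    norm_le_zero_iff.mp (by simpa [hf] using hstab f)
  rw [norm_sq_apply_steepestDescentStep, sub_sub_cancel]
  calc ‖W e‖ ^ 2 ≤ C ^ 2 * ‖(W†) (W e)‖ ^ 2 := by
        rw [← mul_pow]; gcongr; exact norm_apply_le_mul_norm_adjoint_apply hC hstab e
    _ ≤ C ^ 2 * (‖W‖ ^ 2 * (‖(W†) (W e)‖ ^ 2 *
          (‖(W†) (W e)‖ ^ 2 / ‖W ((W†) (W e))‖ ^ 2))) := by
        gcongr; exact norm_sq_le_opNorm_sq_mul_lineSearchDecrease W (hinj _)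
    _ = _ := by ring

theorem norm_apply_steepestDescentStep_le {C : ℝ} (hC : 0 ≤ C)
    (hstab : ∀ f : X, ‖f‖ ≤ C * ‖W f‖) (e : X) :
    ‖W (steepestDescentStep W e)‖ ≤ steepestDescentRate C W * ‖W e‖ := by
  set κ := max (C * ‖W‖) 1
  have hκ : 0 < κ := lt_max_of_lt_right one_pos
  have hdecrease : ‖W e‖ ^ 2 ≤ κ ^ 2 * (‖W e‖ ^ 2 - ‖W (steepestDescentStep W e)‖ ^ 2) := by
    refine (norm_sq_apply_le_mul_sub_norm_sq_apply_steepestDescentStep hC hstab e).trans ?_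
    have hnonneg : 0 ≤ ‖W e‖ ^ 2 - ‖W (steepestDescentStep W e)‖ ^ 2 := by
      rw [norm_sq_apply_steepestDescentStep, sub_sub_cancel]; positivity
    gcongr
    exact le_max_left _ _
  have hsq : ‖W (steepestDescentStep W e)‖ ^ 2 ≤ (1 - 1 / κ ^ 2) * ‖W e‖ ^ 2 := by
    rw [sub_mul, one_div_mul_eq_div, le_sub_comm, div_le_iff₀' (by positivity)]
    linarith
  rw [steepestDescentRate, ← Real.sqrt_sq (norm_nonneg (W e)), ← Real.sqrt_mul' _ (sq_nonneg _),
    ← Real.sqrt_sq (norm_nonneg (W _))]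
  exact Real.sqrt_le_sqrt hsq

theorem norm_iterate_steepestDescentStep_le {C : ℝ} (hC : 0 ≤ C)
    (hstab : ∀ f : X, ‖f‖ ≤ C * ‖W f‖) (e : X) (k : ℕ) :
    ‖(steepestDescentStep W)^[k] e‖ ≤ C * ‖W‖ * steepestDescentRate C W ^ k * ‖e‖ := by
  have hres : ‖W ((steepestDescentStep W)^[k] e)‖ ≤ steepestDescentRate C W ^ k * ‖W e‖ := by
    induction k with
    | zero => simp
    | succ k ih =>
      rw [Function.iterate_succ_apply', pow_succ', mul_assoc]
      exact (norm_apply_steepestDescentStep_le hC hstab _).trans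
        (mul_le_mul_of_nonneg_left ih (Real.sqrt_nonneg _))
  have hrate : 0 ≤ steepestDescentRate C W ^ k := pow_nonneg (Real.sqrt_nonneg _) k
  calc ‖(steepestDescentStep W)^[k] e‖ ≤ C * ‖W ((steepestDescentStep W)^[k] e)‖ := hstab _
    _ ≤ C * (steepestDescentRate C W ^ k * (‖W‖ * ‖e‖)) := by
        gcongr
        exact hres.trans (mul_le_mul_of_nonneg_left (W.le_opNorm e) hrate)
    _ = C * ‖W‖ * steepestDescentRate C W ^ k * ‖e‖ := by ring

end SteepestDescent

/-- linear convergence of steepest descent, well-posed case.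
Let `X, Y` be real Hilbert spaces, `W : X → Y` bounded linear with adjoint `W*`, and
suppose `‖f‖ ≤ C ‖W f‖` for all `f` (`C > 0`). Fix `g^δ ∈ Y`, let `f†` be the unique
minimizer of `Φ(f) = ½‖W f − g^δ‖²`, and define the steepest descent iteration by
`f_0 = 0`, `s_k = W*(W f_k − g^δ)`, `f_{k+1} = f_k − γ_k s_k` with
`γ_k = ‖s_k‖² / ‖W s_k‖²` when `s_k ≠ 0`, and `f_{k+1} = f_k` when `s_k = 0`. Then there
are `a ∈ [0, 1)` and `C'' ≥ 0` with `‖f† − f_k‖ ≤ C'' a^k ‖f†‖` for all `k`. -/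
theorem stmt6
    {X Y : Type*}
    [NormedAddCommGroup X] [InnerProductSpace ℝ X] [CompleteSpace X]
    [NormedAddCommGroup Y] [InnerProductSpace ℝ Y] [CompleteSpace Y]
    (W : X →L[ℝ] Y)
    (C : ℝ) (hC : 0 < C)
    (hstab : ∀ f : X, ‖f‖ ≤ C * ‖W f‖)
    (gδ : Y) (fdag : X)
    (hmin : ∀ h : X, (1 / 2) * ‖W fdag - gδ‖ ^ 2 ≤ (1 / 2) * ‖W h - gδ‖ ^ 2)
    (fs : ℕ → X) (hfs0 : fs 0 = 0)
    (hfs : ∀ k : ℕ,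
      (ContinuousLinearMap.adjoint W (W (fs k) - gδ) = 0 → fs (k + 1) = fs k) ∧
      (ContinuousLinearMap.adjoint W (W (fs k) - gδ) ≠ 0 →
        fs (k + 1) = fs k -
          (‖ContinuousLinearMap.adjoint W (W (fs k) - gδ)‖ ^ 2 /
            ‖W (ContinuousLinearMap.adjoint W (W (fs k) - gδ))‖ ^ 2) •
              ContinuousLinearMap.adjoint W (W (fs k) - gδ))) :
    ∃ a : ℝ, 0 ≤ a ∧ a < 1 ∧
      ∃ C'' : ℝ, 0 ≤ C'' ∧ ∀ k : ℕ, ‖fdag - fs k‖ ≤ C'' * a ^ k * ‖fdag‖ := by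
  have hnormal : (W†) (W fdag - gδ) = 0 :=
    adjoint_apply_sub_eq_zero_of_forall_norm_sq_le fun h => by linarith [hmin h]
  have hstep : ∀ k, fs (k + 1) - fdag = steepestDescentStep W (fs k - fdag) := by
    intro k
    have hgrad : (W†) (W (fs k) - gδ) = (W†) (W (fs k - fdag)) := by
      rw [show W (fs k) - gδ = W (fs k - fdag) + (W fdag - gδ) by rw [map_sub]; abel, map_add,
        hnormal, add_zero]
    by_cases hs : (W†) (W (fs k) - gδ) = 0
    · rw [(hfs k).1 hs, steepestDescentStep, ← hgrad, hs, smul_zero, sub_zero]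
    · rw [(hfs k).2 hs, steepestDescentStep, hgrad, sub_right_comm]
  have herror : ∀ k, fs k - fdag = (steepestDescentStep W)^[k] (-fdag) := by
    intro k
    induction k with
    | zero => rw [hfs0, zero_sub, Function.iterate_zero_apply]
    | succ k ih => rw [Function.iterate_succ_apply', ← ih, hstep]
  refine ⟨steepestDescentRate C W, Real.sqrt_nonneg _, steepestDescentRate_lt_one C W,
    C * ‖W‖, by positivity, fun k => ?_⟩
  rw [norm_sub_rev, herror, ← norm_neg fdag]
  exact norm_iterate_steepestDescentStep_le hC.le hstab _ k
end

section
/- Let X and Y be real Hilbert spaces, let W : X → Y be a bounded linear operator with adjoint W* (W ≠ 0), let f ∈ X, let δ > 0 and g^δ ∈ Y with ‖g^δ − W f‖_Y ≤ δ, and let τ > 1 and 0 < γ < 2/‖W‖². Then the Landweber iterates f_0 = 0, f_{k+1} = f_k − γ W*(W f_k − g^δ) satisfy ‖W f_{k+1} − g^δ‖_Y ≤ τ δ for some k ∈ ℕ; consequently the Morozov stopping index k*(δ, g^δ) = min{ k ∈ ℕ : ‖W f_{k+1} − g^δ‖_Y ≤ τ δ } is well defined (finite). -/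
/-!
Let `S = I - γ W* W` on `X` and `T = I - γ W W*` on `Y`, so that `W S = T W`. The residuals of the
Landweber iteration satisfy `W fₖ - g^δ = Tᵏ (-g^δ) = -(Tᵏ (g^δ - W f) + W Sᵏ f)`. For
`γ ‖W‖² ≤ 2` both operators are nonexpansive, so the noise term stays below `δ`. The estimate
`‖S u‖² ≤ ‖u‖² - γ (2 - γ ‖W‖²) ‖W u‖²` telescopes to `∑ₖ ‖W Sᵏ f‖² < ∞`, so `W Sᵏ f → 0` and the
residual eventually drops below `δ + (τ - 1) δ`.
-/

open Filter Topology
open scoped RealInnerProductSpace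

namespace ContinuousLinearMap

variable {E F : Type*} [NormedAddCommGroup E] [InnerProductSpace ℝ E] [CompleteSpace E]
  [NormedAddCommGroup F] [InnerProductSpace ℝ F] [CompleteSpace F]

noncomputable def landweber (A : E →L[ℝ] F) (γ : ℝ) : E →L[ℝ] E :=
  .id ℝ E - γ • (adjoint A ∘L A)

variable (A : E →L[ℝ] F) (γ : ℝ)

theorem landweber_apply (u : E) : landweber A γ u = u - γ • adjoint A (A u) := rfl

theorem landweber_pow_succ_apply (k : ℕ) (u : E) :
    (landweber A γ ^ (k + 1)) u = landweber A γ ((landweber A γ ^ k) u) := by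
  rw [pow_succ']; rfl

theorem norm_landweber_apply_sq_le (u : E) :
    ‖landweber A γ u‖ ^ 2 ≤ ‖u‖ ^ 2 - γ * (2 - γ * ‖A‖ ^ 2) * ‖A u‖ ^ 2 := by
  have hinner : ⟪u, adjoint A (A u)⟫ = ‖A u‖ ^ 2 := by
    rw [adjoint_inner_right, real_inner_self_eq_norm_sq]
  have hnorm : ‖adjoint A (A u)‖ ≤ ‖A‖ * ‖A u‖ := by
    simpa only [LinearIsometryEquiv.norm_map] using (adjoint A).le_opNorm (A u)
  have hnorm_sq : ‖adjoint A (A u)‖ ^ 2 ≤ ‖A‖ ^ 2 * ‖A u‖ ^ 2 := by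
    rw [← mul_pow]; gcongr
  rw [landweber_apply, norm_sub_sq_real, real_inner_smul_right, hinner, norm_smul,
    mul_pow, Real.norm_eq_abs, sq_abs]
  nlinarith [mul_le_mul_of_nonneg_left hnorm_sq (sq_nonneg γ)]

variable {A γ}

theorem norm_landweber_apply_le (hγ₀ : 0 ≤ γ) (hγ : γ * ‖A‖ ^ 2 ≤ 2) (u : E) :
    ‖landweber A γ u‖ ≤ ‖u‖ := by
  refine le_of_sq_le_sq ?_ (norm_nonneg u)
  have : 0 ≤ γ * (2 - γ * ‖A‖ ^ 2) * ‖A u‖ ^ 2 := by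
    have := sub_nonneg.mpr hγ
    positivity
  linarith [norm_landweber_apply_sq_le A γ u]

theorem norm_landweber_pow_apply_le (hγ₀ : 0 ≤ γ) (hγ : γ * ‖A‖ ^ 2 ≤ 2) (k : ℕ) (u : E) :
    ‖(landweber A γ ^ k) u‖ ≤ ‖u‖ := by
  induction k with
  | zero => simp
  | succ k ih =>
    rw [landweber_pow_succ_apply]
    exact (norm_landweber_apply_le hγ₀ hγ _).trans ih

theorem summable_norm_apply_landweber_pow_sq (hγ₀ : 0 < γ) (hγ : γ * ‖A‖ ^ 2 < 2) (u : E) :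
    Summable fun k ↦ ‖A ((landweber A γ ^ k) u)‖ ^ 2 := by
  set c := γ * (2 - γ * ‖A‖ ^ 2)
  have hc : 0 < c := mul_pos hγ₀ (sub_pos.mpr hγ)
  have hdescent (k : ℕ) : c * ‖A ((landweber A γ ^ k) u)‖ ^ 2 ≤
      ‖(landweber A γ ^ k) u‖ ^ 2 - ‖(landweber A γ ^ (k + 1)) u‖ ^ 2 := by
    rw [landweber_pow_succ_apply]
    linarith [norm_landweber_apply_sq_le A γ ((landweber A γ ^ k) u)]
  refine (summable_mul_left_iff hc.ne').mp <|
    summable_of_sum_range_le (c := ‖u‖ ^ 2) (fun k ↦ by positivity) fun n ↦ ?_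
  calc ∑ k ∈ Finset.range n, c * ‖A ((landweber A γ ^ k) u)‖ ^ 2
      ≤ ∑ k ∈ Finset.range n,
          (‖(landweber A γ ^ k) u‖ ^ 2 - ‖(landweber A γ ^ (k + 1)) u‖ ^ 2) :=
        Finset.sum_le_sum fun k _ ↦ hdescent k
    _ = ‖u‖ ^ 2 - ‖(landweber A γ ^ n) u‖ ^ 2 := by rw [Finset.sum_range_sub']; simp
    _ ≤ ‖u‖ ^ 2 := sub_le_self _ (sq_nonneg _)

theorem tendsto_apply_landweber_pow (hγ₀ : 0 < γ) (hγ : γ * ‖A‖ ^ 2 < 2) (u : E) :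
    Tendsto (fun k ↦ A ((landweber A γ ^ k) u)) atTop (𝓝 0) := by
  rw [tendsto_zero_iff_norm_tendsto_zero]
  simpa using (summable_norm_apply_landweber_pow_sq hγ₀ hγ u).tendsto_atTop_zero.sqrt

variable (A γ)

theorem apply_landweber_apply (u : E) :
    A (landweber A γ u) = landweber (adjoint A) γ (A u) := by
  simp [landweber_apply, adjoint_adjoint]

theorem apply_landweber_pow_apply (k : ℕ) (u : E) :
    A ((landweber A γ ^ k) u) = (landweber (adjoint A) γ ^ k) (A u) := by
  induction k with
  | zero => rfl
  | succ k ih => rw [landweber_pow_succ_apply, landweber_pow_succ_apply, apply_landweber_apply, ih]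

theorem landweber_iterate_residual {g : F} {fs : ℕ → E}
    (hfs : ∀ k, fs (k + 1) = fs k - γ • adjoint A (A (fs k) - g)) (k : ℕ) :
    A (fs k) - g = (landweber (adjoint A) γ ^ k) (A (fs 0) - g) := by
  induction k with
  | zero => rfl
  | succ k ih =>
    rw [landweber_pow_succ_apply, ← ih, hfs, landweber_apply, adjoint_adjoint, map_sub, map_smul]
    abel

end ContinuousLinearMap

open ContinuousLinearMap

theorem stmt10_general
    {X Y : Type*}
    [NormedAddCommGroup X] [InnerProductSpace ℝ X] [CompleteSpace X]
    [NormedAddCommGroup Y] [InnerProductSpace ℝ Y] [CompleteSpace Y]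
    (W : X →L[ℝ] Y)
    (f : X) (δ : ℝ) (hδ : 0 < δ) (gδ : Y)
    (hnoise : ‖gδ - W f‖ ≤ δ)
    (τ : ℝ) (hτ : 1 < τ)
    (γ : ℝ) (hγ0 : 0 < γ) (hγ : γ < 2 / ‖W‖ ^ 2)
    (fs : ℕ → X) (hfs0 : fs 0 = 0)
    (hfs : ∀ k : ℕ,
      fs (k + 1) = fs k - γ • ContinuousLinearMap.adjoint W (W (fs k) - gδ)) :
    ∃ k : ℕ, ‖W (fs (k + 1)) - gδ‖ ≤ τ * δ := by
  have hγW : γ * ‖W‖ ^ 2 < 2 := by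
    rcases (norm_nonneg W).eq_or_lt with hW | hW
    · simp [← hW]
    · exact (lt_div_iff₀ (by positivity)).mp hγ
  have hγW' : γ * ‖adjoint W‖ ^ 2 ≤ 2 := by rw [LinearIsometryEquiv.norm_map]; exact hγW.le
  obtain ⟨K, hK⟩ := ((tendsto_zero_iff_norm_tendsto_zero.mp
    (tendsto_apply_landweber_pow hγ0 hγW f)).comp (tendsto_add_atTop_nat 1)).eventually_lt_const
      (mul_pos (sub_pos.mpr hτ) hδ) |>.exists
  refine ⟨K, ?_⟩
  have hsplit : W (fs (K + 1)) - gδ =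
      -((landweber (adjoint W) γ ^ (K + 1)) (gδ - W f) + W ((landweber W γ ^ (K + 1)) f)) := by
    rw [landweber_iterate_residual W γ hfs, hfs0, apply_landweber_pow_apply, map_zero, zero_sub,
      ← map_add, sub_add_cancel, map_neg]
  calc ‖W (fs (K + 1)) - gδ‖
      ≤ ‖(landweber (adjoint W) γ ^ (K + 1)) (gδ - W f)‖ + ‖W ((landweber W γ ^ (K + 1)) f)‖ := by
        rw [hsplit, norm_neg]; exact norm_add_le _ _
    _ ≤ δ + (τ - 1) * δ :=
        add_le_add ((norm_landweber_pow_apply_le hγ0.le hγW' _ _).trans hnoise) hK.le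
    _ = τ * δ := by ring

/-- well-definedness of the Morozov stopping index for Landweber.
Let `X, Y` be real Hilbert spaces, `W : X → Y` a nonzero bounded linear operator with
adjoint `W*`, `f ∈ X`, `δ > 0` and `g^δ ∈ Y` with `‖g^δ − W f‖ ≤ δ`, and `τ > 1`,
`0 < γ < 2/‖W‖²`. Then the Landweber iterates `f_0 = 0`,
`f_{k+1} = f_k − γ W*(W f_k − g^δ)` satisfy `‖W f_{k+1} − g^δ‖ ≤ τ δ` for some `k ∈ ℕ`;
consequently the Morozov stopping index
`k*(δ, g^δ) = min { k : ‖W f_{k+1} − g^δ‖ ≤ τ δ }` is well defined (finite). -/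
theorem stmt10
    {X Y : Type*}
    [NormedAddCommGroup X] [InnerProductSpace ℝ X] [CompleteSpace X]
    [NormedAddCommGroup Y] [InnerProductSpace ℝ Y] [CompleteSpace Y]
    (W : X →L[ℝ] Y) (hW : W ≠ 0)
    (f : X) (δ : ℝ) (hδ : 0 < δ) (gδ : Y)
    (hnoise : ‖gδ - W f‖ ≤ δ)
    (τ : ℝ) (hτ : 1 < τ)
    (γ : ℝ) (hγ0 : 0 < γ) (hγ : γ < 2 / ‖W‖ ^ 2)
    (fs : ℕ → X) (hfs0 : fs 0 = 0)
    (hfs : ∀ k : ℕ,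
      fs (k + 1) = fs k - γ • ContinuousLinearMap.adjoint W (W (fs k) - gδ)) :
    ∃ k : ℕ, ‖W (fs (k + 1)) - gδ‖ ≤ τ * δ :=
  stmt10_general W f δ hδ gδ hnoise τ hτ γ hγ0 hγ fs hfs0 hfs
end

section
/- Let X and Y be real Hilbert spaces, let W : X → Y be a bounded injective linear operator with adjoint W* (W ≠ 0), let f ∈ X and g = W f, fix τ > 1 and 0 < γ < 1/‖W‖². For noise data g' ∈ Y and noise level δ > 0 with ‖g' − g‖_Y ≤ δ, let f_k(g') denote the Landweber iterates f_0 = 0, f_{k+1} = f_k − γ W*(W f_k − g'), and let k*(δ, g') = min{ k ∈ ℕ : ‖W f_{k+1}(g') − g'‖_Y ≤ τ δ }. If (δ_m) is a sequence of positive numbers converging to 0 and (g_m) ⊂ Y satisfies ‖g_m − W f‖_Y ≤ δ_m for every m, then ‖f_{k*(δ_m, g_m)}(g_m) − f‖_X → 0 as m → ∞. -/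
/-!
Put `A = 1 - γ W*W` and `B = 1 - γ W W*`: both are self-adjoint contractions (as `γ ‖W‖² ≤ 1`),
`W A = B W`, the iterate for data `g'` satisfies `f_k - f = -Aᵏ f + f_k(g' - W f)` with
`‖f_k(z)‖ ≤ √(γ k) ‖z‖`, and its residual is `W f_k - g' = -Bᵏ g'`.
Injectivity of `W` and the mean ergodic theorem for `A²` give `Aᵏ f → 0`. Since
`γ ‖Bᵏ W f‖² ≤ ‖Aᵏ f‖² - ‖Aᵏ⁺¹ f‖²` decreases in `k`, also `k ‖Bᵏ W f‖² → 0`.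
Before stopping, `τ δ < ‖Bᵏ g'‖ ≤ ‖Bᵏ W f‖ + δ`, so the noise term `√(γ k) δ` is bounded by
`√(γ k) ‖Bᵏ W f‖ / (τ - 1)`. Finally, as `δ → 0` the stopping index tends to infinity when
`f ≠ 0`, because `B` is injective for `γ ‖W‖² < 1`.
-/

open Filter Topology
open scoped RealInnerProductSpace
open ContinuousLinearMap (adjoint)

theorem tendsto_pow_apply_zero_of_isSelfAdjoint {E : Type*} [NormedAddCommGroup E]
    [InnerProductSpace ℝ E] [CompleteSpace E] {A : E →L[ℝ] E} (hA : IsSelfAdjoint A)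
    (hA1 : ‖A‖ ≤ 1) (hfix : ∀ x, A (A x) = x → x = 0) (x : E) :
    Tendsto (fun n ↦ (A ^ n) x) atTop (𝓝 0) := by
  have hA2 : ‖A ^ 2‖ ≤ 1 := (norm_pow_le' A two_pos).trans (pow_le_one₀ (norm_nonneg A) hA1)
  have hfix2 : ∀ y ∈ (A ^ 2).eqLocus (1 : E →L[ℝ] E), y = 0 :=
    fun y hy ↦ hfix y (by simpa [pow_two] using hy)
  have hmean := (A ^ 2).tendsto_birkhoffAverage_orthogonalProjection hA2 x
  rw [hfix2 _ (Submodule.coe_mem _)] at hmean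
  -- `⟪A ^ (2 j) x, x⟫ = ‖A ^ j x‖ ^ 2`, so the mean ergodic theorem for `A ^ 2` averages these
  have hmean' : Tendsto (fun N : ℕ ↦ (N : ℝ)⁻¹ * ∑ j ∈ Finset.range N, ‖(A ^ j) x‖ ^ 2)
      atTop (𝓝 0) := by
    convert (hmean.inner tendsto_const_nhds : Tendsto _ _ (𝓝 ⟪(0 : E), x⟫)) using 1
    · ext N
      simp only [birkhoffAverage, birkhoffSum, real_inner_smul_left, sum_inner]
      congr 1
      refine Finset.sum_congr rfl fun j _ ↦ ?_
      rw [id, ← FunLike.coe_pow_eq_iterate, ← pow_mul, mul_comm, pow_mul, sq (A ^ j),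
        ← real_inner_self_eq_norm_sq]
      exact ((hA.pow j).isSymmetric _ _).symm
    · simp
  have hanti : Antitone fun n ↦ ‖(A ^ n) x‖ := antitone_nat_of_succ_le fun n ↦ by
    rw [pow_succ']
    exact (A.le_of_opNorm_le hA1 _).trans (one_mul _).le
  have hsq : Tendsto (fun n ↦ ‖(A ^ n) x‖ ^ 2) atTop (𝓝 0) := by
    refine squeeze_zero' (Eventually.of_forall fun n ↦ by positivity) ?_ hmean'
    filter_upwards [eventually_gt_atTop 0] with N hN
    rw [le_inv_mul_iff₀ (by exact_mod_cast hN)]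
    simpa using Finset.card_nsmul_le_sum (Finset.range N) (fun j ↦ ‖(A ^ j) x‖ ^ 2) _
      fun j hj ↦ pow_le_pow_left₀ (norm_nonneg _) (hanti (Finset.mem_range.1 hj).le) 2
  rw [tendsto_zero_iff_norm_tendsto_zero]
  simpa using hsq.sqrt

theorem tendsto_nat_mul_of_antitone_of_le_sub {e s : ℕ → ℝ} (he : Antitone e)
    (he0 : ∀ n, 0 ≤ e n) (hes : ∀ n, e n ≤ s n - s (n + 1)) (hs : Tendsto s atTop (𝓝 0)) :
    Tendsto (fun n : ℕ ↦ n * e n) atTop (𝓝 0) := by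
  have hs0 : ∀ n, 0 ≤ s n :=
    (antitone_nat_of_succ_le fun n ↦ by linarith [hes n, he0 n]).le_of_tendsto hs
  have hsum : ∀ m n : ℕ, m ≤ n → ((n : ℝ) - m) * e n ≤ s m - s n := by
    intro m n hmn
    induction n, hmn using Nat.le_induction with
    | base => simp
    | succ n hmn ih =>
      have := he (Nat.le_succ n)
      push_cast
      nlinarith [hes n, he0 (n + 1), (Nat.cast_le (α := ℝ)).2 hmn]
  have hhalf : ∀ n : ℕ, (n : ℝ) ≤ 2 * (n - (n / 2 : ℕ)) := fun n ↦ by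
    have : ((2 * (n / 2) : ℕ) : ℝ) ≤ n := by exact_mod_cast Nat.mul_div_le n 2
    push_cast at this
    linarith
  refine squeeze_zero (fun n ↦ mul_nonneg n.cast_nonneg (he0 n)) (fun n ↦ ?_)
    (by simpa using (hs.comp (Nat.tendsto_div_const_atTop two_ne_zero)).const_mul 2)
  calc (n : ℝ) * e n ≤ 2 * ((n - (n / 2 : ℕ)) * e n) := by
        nlinarith [hhalf n, he0 n]
    _ ≤ 2 * s (n / 2) := by
        nlinarith [hsum (n / 2) n (Nat.div_le_self n 2), hs0 n]

section Landweber

variable {X Y : Type*} [NormedAddCommGroup X] [InnerProductSpace ℝ X] [CompleteSpace X]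
  [NormedAddCommGroup Y] [InnerProductSpace ℝ Y] [CompleteSpace Y]

noncomputable def landweberStep (W : X →L[ℝ] Y) (γ : ℝ) : X →L[ℝ] X := 1 - γ • (adjoint W ∘L W)

noncomputable def landweber (W : X →L[ℝ] Y) (γ : ℝ) (g : Y) : ℕ → X
  | 0 => 0
  | k + 1 => landweber W γ g k - γ • adjoint W (W (landweber W γ g k) - g)

variable (W : X →L[ℝ] Y) {γ : ℝ}

lemma landweberStep_apply (x : X) : landweberStep W γ x = x - γ • adjoint W (W x) := rfl

lemma isSelfAdjoint_landweberStep : IsSelfAdjoint (landweberStep W γ) :=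
  .sub (.one _) (.smul (.all γ) W.isPositive_adjoint_comp_self.isSelfAdjoint)

lemma norm_smul_adjoint_apply_sq_le (hγ0 : 0 ≤ γ) (hγ : γ * ‖W‖ ^ 2 ≤ 1) (y : Y) :
    ‖γ • adjoint W y‖ ^ 2 ≤ γ * ‖y‖ ^ 2 := by
  have hy : ‖adjoint W y‖ ≤ ‖W‖ * ‖y‖ := by
    simpa [LinearIsometryEquiv.norm_map] using (adjoint W).le_opNorm y
  rw [norm_smul, Real.norm_of_nonneg hγ0, mul_pow]
  calc γ ^ 2 * ‖adjoint W y‖ ^ 2 ≤ γ ^ 2 * (‖W‖ * ‖y‖) ^ 2 := by gcongr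
    _ = γ * (γ * ‖W‖ ^ 2) * ‖y‖ ^ 2 := by ring
    _ ≤ γ * 1 * ‖y‖ ^ 2 := by gcongr
    _ = γ * ‖y‖ ^ 2 := by ring

lemma norm_landweberStep_apply_sq_add_le (hγ0 : 0 ≤ γ) (hγ : γ * ‖W‖ ^ 2 ≤ 1) (x : X) :
    ‖landweberStep W γ x‖ ^ 2 + γ * ‖W x‖ ^ 2 ≤ ‖x‖ ^ 2 := by
  have h := norm_smul_adjoint_apply_sq_le W hγ0 hγ (W x)
  rw [landweberStep_apply, norm_sub_sq_real, real_inner_smul_right, W.adjoint_inner_right,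
    real_inner_self_eq_norm_sq]
  linarith

lemma norm_landweberStep_apply_le (hγ0 : 0 ≤ γ) (hγ : γ * ‖W‖ ^ 2 ≤ 1) (x : X) :
    ‖landweberStep W γ x‖ ≤ ‖x‖ := by
  rw [← pow_le_pow_iff_left₀ (norm_nonneg _) (norm_nonneg _) two_ne_zero]
  nlinarith [norm_landweberStep_apply_sq_add_le W hγ0 hγ x, sq_nonneg ‖W x‖]

lemma norm_landweberStep_pow_apply_le (hγ0 : 0 ≤ γ) (hγ : γ * ‖W‖ ^ 2 ≤ 1) (k : ℕ) (x : X) :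
    ‖(landweberStep W γ ^ k) x‖ ≤ ‖x‖ := by
  induction k generalizing x with
  | zero => rfl
  | succ k ih =>
    rw [pow_succ, mul_apply_eq_comp]
    exact (ih _).trans (norm_landweberStep_apply_le W hγ0 hγ x)

lemma norm_landweberStep_le (hγ0 : 0 ≤ γ) (hγ : γ * ‖W‖ ^ 2 ≤ 1) : ‖landweberStep W γ‖ ≤ 1 :=
  ContinuousLinearMap.opNorm_le_bound _ zero_le_one fun x ↦ by
    simpa using norm_landweberStep_apply_le W hγ0 hγ x

lemma landweberStep_injective (hγ0 : 0 ≤ γ) (hγ : γ * ‖W‖ ^ 2 < 1) :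
    Function.Injective (landweberStep W γ) := by
  refine (injective_iff_map_eq_zero _).2 fun x hx ↦ ?_
  have hinner : ⟪landweberStep W γ x, x⟫ = ‖x‖ ^ 2 - γ * ‖W x‖ ^ 2 := by
    rw [landweberStep_apply, inner_sub_left, real_inner_smul_left, W.adjoint_inner_left,
      real_inner_self_eq_norm_sq, real_inner_self_eq_norm_sq]
  have hWx : ‖W x‖ ^ 2 ≤ ‖W‖ ^ 2 * ‖x‖ ^ 2 := by
    rw [← mul_pow]; gcongr; exact W.le_opNorm x
  rw [hx, inner_zero_left] at hinner
  have : ‖x‖ ^ 2 ≤ 0 := by nlinarith [mul_le_mul_of_nonneg_left hWx hγ0, sq_nonneg ‖x‖]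
  simpa using this

lemma apply_landweberStep (x : X) :
    W (landweberStep W γ x) = landweberStep (adjoint W) γ (W x) := by
  simp [landweberStep_apply, W.adjoint_adjoint]

lemma apply_landweberStep_pow (k : ℕ) (x : X) :
    W ((landweberStep W γ ^ k) x) = (landweberStep (adjoint W) γ ^ k) (W x) := by
  induction k generalizing x with
  | zero => rfl
  | succ k ih => rw [pow_succ, mul_apply_eq_comp, ih, apply_landweberStep]; rfl

lemma landweber_add (g h : Y) (k : ℕ) :
    landweber W γ (g + h) k = landweber W γ g k + landweber W γ h k := by
  induction k with
  | zero => simp [landweber]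
  | succ k ih =>
    simp only [landweber, ih, map_add, map_sub, smul_sub, smul_add]
    abel

lemma landweber_map_sub_self (f : X) (k : ℕ) :
    landweber W γ (W f) k - f = -((landweberStep W γ ^ k) f) := by
  induction k with
  | zero => simp [landweber]
  | succ k ih =>
    have hpow : (landweberStep W γ ^ k) f = f - landweber W γ (W f) k := by
      rw [← neg_sub, ih, neg_neg]
    rw [pow_succ', mul_apply_eq_comp, hpow, landweberStep_apply, landweber]
    simp only [map_sub, smul_sub]
    abel

lemma landweber_residual (g : Y) (k : ℕ) :
    W (landweber W γ g k) - g = -((landweberStep (adjoint W) γ ^ k) g) := by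
  induction k with
  | zero => simp [landweber]
  | succ k ih =>
    have hpow : (landweberStep (adjoint W) γ ^ k) g = g - W (landweber W γ g k) := by
      rw [← neg_sub, ih, neg_neg]
    rw [pow_succ', mul_apply_eq_comp, hpow, landweberStep_apply, W.adjoint_adjoint, landweber]
    simp only [map_sub, map_smul]
    module

lemma norm_sub_smul_adjoint_sq_le (hγ0 : 0 ≤ γ) (hγ : γ * ‖W‖ ^ 2 ≤ 1) (x : X) (z : Y) :
    ‖x - γ • adjoint W (W x - z)‖ ^ 2 ≤ ‖x‖ ^ 2 + γ * ‖z‖ ^ 2 := by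
  have hstep := norm_smul_adjoint_apply_sq_le W hγ0 hγ (W x - z)
  have hz : ‖z‖ ^ 2 = ‖W x‖ ^ 2 - 2 * ⟪W x, W x - z⟫ + ‖W x - z‖ ^ 2 := by
    rw [← norm_sub_sq_real, sub_sub_cancel]
  rw [norm_sub_sq_real, real_inner_smul_right, W.adjoint_inner_right]
  nlinarith [mul_nonneg hγ0 (sq_nonneg ‖W x‖)]

lemma norm_landweber_le (hγ0 : 0 ≤ γ) (hγ : γ * ‖W‖ ^ 2 ≤ 1) (z : Y) (k : ℕ) :
    ‖landweber W γ z k‖ ≤ √(γ * k) * ‖z‖ := by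
  have hsq : ‖landweber W γ z k‖ ^ 2 ≤ γ * k * ‖z‖ ^ 2 := by
    induction k with
    | zero => simp [landweber]
    | succ k ih =>
      rw [landweber]
      push_cast
      linarith [norm_sub_smul_adjoint_sq_le W hγ0 hγ (landweber W γ z k) z]
  rw [← Real.sqrt_sq (norm_nonneg z), ← Real.sqrt_mul (by positivity)]
  exact Real.le_sqrt_of_sq_le hsq

lemma norm_landweber_sub_le (hγ0 : 0 ≤ γ) (hγ : γ * ‖W‖ ^ 2 ≤ 1) (f : X) (g : Y) (k : ℕ) :
    ‖landweber W γ g k - f‖ ≤ ‖(landweberStep W γ ^ k) f‖ + √(γ * k) * ‖g - W f‖ := by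
  have hsplit : landweber W γ g k - f =
      -((landweberStep W γ ^ k) f) + landweber W γ (g - W f) k := by
    rw [← landweber_map_sub_self, sub_add_eq_add_sub, ← landweber_add, add_sub_cancel]
  rw [hsplit]
  exact (norm_add_le _ _).trans (by rw [norm_neg]; gcongr; exact norm_landweber_le W hγ0 hγ _ k)

lemma tendsto_landweberStep_pow_apply (hγ0 : 0 < γ) (hγ : γ * ‖W‖ ^ 2 ≤ 1)
    (hW : Function.Injective W) (f : X) :
    Tendsto (fun k ↦ (landweberStep W γ ^ k) f) atTop (𝓝 0) := by
  refine tendsto_pow_apply_zero_of_isSelfAdjoint (isSelfAdjoint_landweberStep W)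
    (norm_landweberStep_le W hγ0.le hγ) (fun x hx ↦ ?_) f
  have hcontr : ‖x‖ ≤ ‖landweberStep W γ x‖ := by
    conv_lhs => rw [← hx]
    exact norm_landweberStep_apply_le W hγ0.le hγ _
  have hWx : ‖W x‖ ^ 2 ≤ 0 := by
    nlinarith [norm_landweberStep_apply_sq_add_le W hγ0.le hγ x, norm_nonneg x]
  exact (map_eq_zero_iff W hW).1 (norm_eq_zero.1 (by nlinarith [norm_nonneg (W x)]))

lemma tendsto_sqrt_mul_norm_landweberStep_adjoint_pow (hγ0 : 0 < γ) (hγ : γ * ‖W‖ ^ 2 ≤ 1)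
    (hW : Function.Injective W) (f : X) :
    Tendsto (fun k : ℕ ↦ √(γ * k) * ‖(landweberStep (adjoint W) γ ^ k) (W f)‖) atTop (𝓝 0) := by
  have hγ' : γ * ‖adjoint W‖ ^ 2 ≤ 1 := by rwa [LinearIsometryEquiv.norm_map]
  -- `γ ‖W Aᵏ f‖² = γ ‖Bᵏ W f‖²` is at most the drop of `‖Aᵏ f‖²` in step `k`
  have hrate := tendsto_nat_mul_of_antitone_of_le_sub
    (e := fun k ↦ γ * ‖(landweberStep (adjoint W) γ ^ k) (W f)‖ ^ 2)
    (s := fun k ↦ ‖(landweberStep W γ ^ k) f‖ ^ 2)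
    (antitone_nat_of_succ_le fun k ↦ by
      rw [pow_succ' (landweberStep (adjoint W) γ) k, mul_apply_eq_comp]
      gcongr
      exact norm_landweberStep_apply_le _ hγ0.le hγ' _)
    (fun k ↦ by positivity)
    (fun k ↦ by
      rw [← apply_landweberStep_pow, pow_succ' (landweberStep W γ) k, mul_apply_eq_comp]
      linarith [norm_landweberStep_apply_sq_add_le W hγ0.le hγ ((landweberStep W γ ^ k) f)])
    (by simpa using ((tendsto_landweberStep_pow_apply W hγ0 hγ hW f).norm.pow 2))
  convert hrate.sqrt using 1
  · ext k
    rw [← mul_assoc, mul_comm (k : ℝ) γ, Real.sqrt_mul (by positivity : (0 : ℝ) ≤ γ * k),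
      Real.sqrt_sq (norm_nonneg _)]
  · simp

lemma sub_one_mul_lt_norm_of_lt_norm_residual (hγ0 : 0 ≤ γ) (hγ : γ * ‖W‖ ^ 2 ≤ 1)
    {τ δ : ℝ} {f : X} {g : Y} (hg : ‖g - W f‖ ≤ δ) {k : ℕ}
    (hk : τ * δ < ‖W (landweber W γ g k) - g‖) :
    (τ - 1) * δ < ‖(landweberStep (adjoint W) γ ^ k) (W f)‖ := by
  have hγ' : γ * ‖adjoint W‖ ^ 2 ≤ 1 := by rwa [LinearIsometryEquiv.norm_map]
  rw [landweber_residual, norm_neg] at hk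
  have hnoise : ‖(landweberStep (adjoint W) γ ^ k) g‖ ≤
      ‖(landweberStep (adjoint W) γ ^ k) (W f)‖ + δ := by
    rw [← add_sub_cancel (W f) g, map_add]
    exact norm_add_le_of_le le_rfl ((norm_landweberStep_pow_apply_le _ hγ0 hγ' k _).trans hg)
  linarith

lemma norm_landweber_sub_le_of_discrepancy (hγ0 : 0 ≤ γ) (hγ : γ * ‖W‖ ^ 2 ≤ 1)
    {τ δ : ℝ} (hτ : 1 < τ) {f : X} {g : Y} (hg : ‖g - W f‖ ≤ δ) {k : ℕ}
    (hk : ∀ j < k, τ * δ < ‖W (landweber W γ g (j + 1)) - g‖) :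
    ‖landweber W γ g k - f‖ ≤ ‖(landweberStep W γ ^ k) f‖ +
      √(γ * k) * ‖(landweberStep (adjoint W) γ ^ k) (W f)‖ / (τ - 1) := by
  cases k with
  | zero => simp [landweber]
  | succ j =>
    have hlow := sub_one_mul_lt_norm_of_lt_norm_residual W hγ0 hγ hg (hk j j.lt_succ_self)
    refine (norm_landweber_sub_le W hγ0 hγ f g _).trans ?_
    rw [mul_div_assoc]
    gcongr
    rw [le_div_iff₀ (by linarith)]
    nlinarith

lemma tendsto_atTop_of_norm_landweber_residual_le (hγ0 : 0 ≤ γ) (hγ : γ * ‖W‖ ^ 2 < 1)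
    {τ : ℝ} {g : Y} (hg : g ≠ 0) {gm : ℕ → Y} (hgm : Tendsto gm atTop (𝓝 g)) {δ : ℕ → ℝ}
    (hδ : Tendsto δ atTop (𝓝 0)) {k : ℕ → ℕ}
    (hstop : ∀ m, ‖W (landweber W γ (gm m) (k m + 1)) - gm m‖ ≤ τ * δ m) :
    Tendsto k atTop atTop := by
  have hγ' : γ * ‖adjoint W‖ ^ 2 < 1 := by rwa [LinearIsometryEquiv.norm_map]
  have hne : ∀ i, ∀ᶠ m in atTop, k m ≠ i := fun i ↦ by
    set B := landweberStep (adjoint W) γ ^ (i + 1)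
    have hpos : 0 < ‖B g‖ := by
      rw [norm_pos_iff, map_ne_zero_iff _ (by
        rw [FunLike.coe_pow_eq_iterate]
        exact (landweberStep_injective _ hγ0 hγ').iterate _)]
      exact hg
    have hlim : Tendsto (fun m ↦ ‖B (gm m)‖ - τ * δ m) atTop (𝓝 ‖B g‖) := by
      simpa using ((B.continuous.tendsto g).comp hgm).norm.sub (hδ.const_mul τ)
    filter_upwards [hlim.eventually_const_lt hpos] with m hm hkm
    have hstop_m := hstop m
    rw [hkm, landweber_residual, norm_neg] at hstop_m
    linarith
  refine tendsto_atTop.2 fun K ↦ ?_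
  filter_upwards [(eventually_all_finite (Set.finite_Iio K)).2 fun i _ ↦ hne i] with m hm
  by_contra h
  exact hm (k m) (not_le.1 h) rfl

end Landweber

theorem stmt11_general
    {X Y : Type*}
    [NormedAddCommGroup X] [InnerProductSpace ℝ X] [CompleteSpace X]
    [NormedAddCommGroup Y] [InnerProductSpace ℝ Y] [CompleteSpace Y]
    (W : X →L[ℝ] Y) (hinj : Function.Injective ⇑W)
    (f : X)
    (τ : ℝ) (hτ : 1 < τ)
    (γ : ℝ) (hγ0 : 0 < γ) (hγ : γ < 1 / ‖W‖ ^ 2)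
    (F : Y → ℕ → X)
    (hF0 : ∀ g' : Y, F g' 0 = 0)
    (hFrec : ∀ (g' : Y) (k : ℕ),
      F g' (k + 1) = F g' k - γ • ContinuousLinearMap.adjoint W (W (F g' k) - g'))
    (kstar : ℝ → Y → ℕ)
    (hkstar : ∀ δ : ℝ, 0 < δ → ∀ g' : Y, ‖g' - W f‖ ≤ δ →
      ‖W (F g' (kstar δ g' + 1)) - g'‖ ≤ τ * δ ∧
        ∀ j : ℕ, j < kstar δ g' → τ * δ < ‖W (F g' (j + 1)) - g'‖)
    (δm : ℕ → ℝ) (hδpos : ∀ m : ℕ, 0 < δm m)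
    (hδ0 : Filter.Tendsto δm Filter.atTop (nhds 0))
    (gm : ℕ → Y) (hgm : ∀ m : ℕ, ‖gm m - W f‖ ≤ δm m) :
    Filter.Tendsto (fun m : ℕ => ‖F (gm m) (kstar (δm m) (gm m)) - f‖)
      Filter.atTop (nhds 0) := by
  have hγW : γ * ‖W‖ ^ 2 < 1 := by
    rcases (norm_nonneg W).eq_or_lt with hW | hW
    · simp [← hW]
    · rwa [lt_div_iff₀ (by positivity)] at hγ
  obtain rfl : F = landweber W γ := by
    funext g' k
    induction k with
    | zero => exact hF0 g'
    | succ k ih => rw [hFrec, ih, landweber]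
  have hspec := fun m ↦ hkstar (δm m) (hδpos m) (gm m) (hgm m)
  refine squeeze_zero (fun _ ↦ norm_nonneg _)
    (fun m ↦ norm_landweber_sub_le_of_discrepancy W hγ0.le hγW.le hτ (hgm m) (hspec m).2) ?_
  by_cases hf : f = 0
  · simp [hf]
  have hgm_lim : Tendsto gm atTop (𝓝 (W f)) :=
    tendsto_iff_norm_sub_tendsto_zero.2 (squeeze_zero (fun _ ↦ norm_nonneg _) hgm hδ0)
  have hk := tendsto_atTop_of_norm_landweber_residual_le W hγ0.le hγW
    ((map_ne_zero_iff W hinj).2 hf) hgm_lim hδ0 fun m ↦ (hspec m).1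
  have hbound := (tendsto_landweberStep_pow_apply W hγ0 hγW.le hinj f).norm.add
    ((tendsto_sqrt_mul_norm_landweberStep_adjoint_pow W hγ0 hγW.le hinj f).div_const (τ - 1))
  simpa only [add_zero, zero_div, norm_zero, Function.comp_def] using hbound.comp hk

/-- Landweber iteration with the discrepancy principle is a convergent
regularization method. Let `X, Y` be real Hilbert spaces, `W : X → Y` a nonzero bounded
injective linear operator with adjoint `W*`, `f ∈ X`, `g = W f`, `τ > 1`, `0 < γ < 1/‖W‖²`.
For noisy data `g'` with noise level `δ > 0`, `‖g' − g‖ ≤ δ`, let `f_k(g')` be the Landweber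
iterates `f_0 = 0`, `f_{k+1} = f_k − γ W*(W f_k − g')`, and let
`k*(δ, g') = min { k : ‖W f_{k+1}(g') − g'‖ ≤ τ δ }`. If `δ_m > 0`, `δ_m → 0`, and
`‖g_m − W f‖ ≤ δ_m` for all `m`, then `‖f_{k*(δ_m, g_m)}(g_m) − f‖ → 0` as `m → ∞`. -/
theorem stmt11
    {X Y : Type*}
    [NormedAddCommGroup X] [InnerProductSpace ℝ X] [CompleteSpace X]
    [NormedAddCommGroup Y] [InnerProductSpace ℝ Y] [CompleteSpace Y]
    (W : X →L[ℝ] Y) (hW : W ≠ 0) (hinj : Function.Injective ⇑W)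
    (f : X)
    (τ : ℝ) (hτ : 1 < τ)
    (γ : ℝ) (hγ0 : 0 < γ) (hγ : γ < 1 / ‖W‖ ^ 2)
    (F : Y → ℕ → X)
    (hF0 : ∀ g' : Y, F g' 0 = 0)
    (hFrec : ∀ (g' : Y) (k : ℕ),
      F g' (k + 1) = F g' k - γ • ContinuousLinearMap.adjoint W (W (F g' k) - g'))
    (kstar : ℝ → Y → ℕ)
    (hkstar : ∀ δ : ℝ, 0 < δ → ∀ g' : Y, ‖g' - W f‖ ≤ δ →
      ‖W (F g' (kstar δ g' + 1)) - g'‖ ≤ τ * δ ∧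
        ∀ j : ℕ, j < kstar δ g' → τ * δ < ‖W (F g' (j + 1)) - g'‖)
    (δm : ℕ → ℝ) (hδpos : ∀ m : ℕ, 0 < δm m)
    (hδ0 : Filter.Tendsto δm Filter.atTop (nhds 0))
    (gm : ℕ → Y) (hgm : ∀ m : ℕ, ‖gm m - W f‖ ≤ δm m) :
    Filter.Tendsto (fun m : ℕ => ‖F (gm m) (kstar (δm m) (gm m)) - f‖)
      Filter.atTop (nhds 0) :=
  stmt11_general W hinj f τ hτ γ hγ0 hγ F hF0 hFrec kstar hkstar δm hδpos hδ0 gm hgm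
end

section
/- Let d ≥ 1, let c, a : ℝ^d → ℝ with c(x) ≠ 0 for every x, let c₀ ≠ 0 be a real constant, and let p, v, r, s : ℝ^d × ℝ → ℝ. Fix a point (x₀, t₀) and assume: (i) p(x₀, ·), v(x₀, ·), r(x₀, ·) are twice differentiable at t₀ and the spatial Laplacians Δp(·, t₀), Δv(·, t₀), Δr(·, t₀) exist at x₀; (ii) ∂²_t v(x₀, t) = (1 − c₀²/c(x₀)²) ∂²_t p(x₀, t) holds at t = t₀; (iii) ∂_t r(x₀, t) = c₀² a(x₀) p(x₀, t) holds for all t in a neighborhood of t₀. Define w = p − v + r. Then the damped wave equation c(x₀)⁻² ∂²_t p(x₀, t₀) + a(x₀) ∂_t p(x₀, t₀) − Δp(x₀, t₀) = s(x₀, t₀) holds if and only if ∂²_t w(x₀, t₀) − c₀² Δw(x₀, t₀) = c₀² s(x₀, t₀) + c₀² Δv(x₀, t₀) − c₀² Δr(x₀, t₀). -/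
open scoped BigOperators

/-- First partial derivative in the time variable of `u : ℝ^d × ℝ → ℝ`. -/
noncomputable def timeDeriv {d : ℕ} (u : EuclideanSpace ℝ (Fin d) × ℝ → ℝ)
    (x : EuclideanSpace ℝ (Fin d)) (t : ℝ) : ℝ :=
  deriv (fun τ => u (x, τ)) t

/-- Second partial derivative in the time variable of `u : ℝ^d × ℝ → ℝ`. -/
noncomputable def timeDeriv2 {d : ℕ} (u : EuclideanSpace ℝ (Fin d) × ℝ → ℝ)
    (x : EuclideanSpace ℝ (Fin d)) (t : ℝ) : ℝ :=
  deriv (fun τ => timeDeriv u x τ) t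

/-- The Laplacian (in the spatial variable) of `u : ℝ^d → ℝ`, as the sum of the
second partial derivatives along the coordinate directions. -/
noncomputable def spaceLap {d : ℕ} (u : EuclideanSpace ℝ (Fin d) → ℝ)
    (x : EuclideanSpace ℝ (Fin d)) : ℝ :=
  ∑ i : Fin d,
    fderiv ℝ (fun y => fderiv ℝ u y (EuclideanSpace.single i 1)) x
      (EuclideanSpace.single i 1)

/-- `u(x, ·)` is twice differentiable at `t`: it is differentiable in time near `t`
and its time derivative is differentiable at `t`. -/
def TwiceDiffAtTime {d : ℕ} (u : EuclideanSpace ℝ (Fin d) × ℝ → ℝ)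
    (x : EuclideanSpace ℝ (Fin d)) (t : ℝ) : Prop :=
  (∀ᶠ τ in nhds t, DifferentiableAt ℝ (fun σ => u (x, σ)) τ) ∧
    DifferentiableAt ℝ (deriv fun σ => u (x, σ)) t

/-- The Laplacian of `u : ℝ^d → ℝ` exists at `x`: `u` is differentiable near `x` and its
(total) derivative is differentiable at `x`. -/
def LapExistsAt {d : ℕ} (u : EuclideanSpace ℝ (Fin d) → ℝ)
    (x : EuclideanSpace ℝ (Fin d)) : Prop :=
  (∀ᶠ y in nhds x, DifferentiableAt ℝ u y) ∧ DifferentiableAt ℝ (fderiv ℝ u) x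

/-!
Everything is linear. Differentiating (iii) gives `r_tt = c₀² a p_t`, and with (ii) this turns
`w_tt − c₀² Δw` for `w = p − v + r` into `c₀² (c⁻² p_tt + a p_t − Δp) + c₀² Δv − c₀² Δr`; the two
equations therefore differ only by the nonzero factor `c₀²`.
-/

open Filter Topology

section TimeDerivative

variable {d : ℕ} {u v : EuclideanSpace ℝ (Fin d) × ℝ → ℝ} {x : EuclideanSpace ℝ (Fin d)}
  {t : ℝ}

theorem timeDeriv_add_eventuallyEq (hu : TwiceDiffAtTime u x t) (hv : TwiceDiffAtTime v x t) :
    timeDeriv (fun q => u q + v q) x =ᶠ[𝓝 t] fun τ => timeDeriv u x τ + timeDeriv v x τ := by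
  filter_upwards [hu.1, hv.1] with τ huτ hvτ using deriv_fun_add huτ hvτ

theorem timeDeriv_sub_eventuallyEq (hu : TwiceDiffAtTime u x t) (hv : TwiceDiffAtTime v x t) :
    timeDeriv (fun q => u q - v q) x =ᶠ[𝓝 t] fun τ => timeDeriv u x τ - timeDeriv v x τ := by
  filter_upwards [hu.1, hv.1] with τ huτ hvτ using deriv_fun_sub huτ hvτ

theorem TwiceDiffAtTime.sub (hu : TwiceDiffAtTime u x t) (hv : TwiceDiffAtTime v x t) :
    TwiceDiffAtTime (fun q => u q - v q) x t :=
  ⟨by filter_upwards [hu.1, hv.1] with τ huτ hvτ using huτ.fun_sub hvτ,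
    (timeDeriv_sub_eventuallyEq hu hv).differentiableAt_iff.2 (hu.2.fun_sub hv.2)⟩

theorem timeDeriv2_add (hu : TwiceDiffAtTime u x t) (hv : TwiceDiffAtTime v x t) :
    timeDeriv2 (fun q => u q + v q) x t = timeDeriv2 u x t + timeDeriv2 v x t := by
  rw [timeDeriv2, (timeDeriv_add_eventuallyEq hu hv).deriv_eq]
  exact deriv_fun_add hu.2 hv.2

theorem timeDeriv2_sub (hu : TwiceDiffAtTime u x t) (hv : TwiceDiffAtTime v x t) :
    timeDeriv2 (fun q => u q - v q) x t = timeDeriv2 u x t - timeDeriv2 v x t := by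
  rw [timeDeriv2, (timeDeriv_sub_eventuallyEq hu hv).deriv_eq]
  exact deriv_fun_sub hu.2 hv.2

theorem timeDeriv2_eq_of_timeDeriv_eventuallyEq_const_mul (k : ℝ)
    (hu : DifferentiableAt ℝ (fun σ => u (x, σ)) t)
    (hv : ∀ᶠ τ in 𝓝 t, timeDeriv v x τ = k * u (x, τ)) :
    timeDeriv2 v x t = k * timeDeriv u x t := by
  rw [timeDeriv2, EventuallyEq.deriv_eq hv]
  exact deriv_const_mul k hu

end TimeDerivative

section Laplacian

variable {d : ℕ} {u v : EuclideanSpace ℝ (Fin d) → ℝ} {x : EuclideanSpace ℝ (Fin d)}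

theorem fderiv_add_eventuallyEq (hu : LapExistsAt u x) (hv : LapExistsAt v x) :
    fderiv ℝ (fun z => u z + v z) =ᶠ[𝓝 x] fderiv ℝ u + fderiv ℝ v := by
  filter_upwards [hu.1, hv.1] with y huy hvy using fderiv_fun_add huy hvy

theorem fderiv_sub_eventuallyEq (hu : LapExistsAt u x) (hv : LapExistsAt v x) :
    fderiv ℝ (fun z => u z - v z) =ᶠ[𝓝 x] fderiv ℝ u - fderiv ℝ v := by
  filter_upwards [hu.1, hv.1] with y huy hvy using fderiv_fun_sub huy hvy

theorem LapExistsAt.sub (hu : LapExistsAt u x) (hv : LapExistsAt v x) :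
    LapExistsAt (fun z => u z - v z) x :=
  ⟨by filter_upwards [hu.1, hv.1] with y huy hvy using huy.fun_sub hvy,
    (fderiv_sub_eventuallyEq hu hv).differentiableAt_iff.2 (hu.2.sub hv.2)⟩

theorem spaceLap_add (hu : LapExistsAt u x) (hv : LapExistsAt v x) :
    spaceLap (fun z => u z + v z) x = spaceLap u x + spaceLap v x := by
  simp only [spaceLap, ← Finset.sum_add_distrib]
  refine Finset.sum_congr rfl fun i _ => ?_
  set e := EuclideanSpace.single (𝕜 := ℝ) i (1 : ℝ)
  have hderiv : (fun y => fderiv ℝ (fun z => u z + v z) y e) =ᶠ[𝓝 x]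
      fun y => fderiv ℝ u y e + fderiv ℝ v y e := by
    filter_upwards [fderiv_add_eventuallyEq hu hv] with y hy using by simp [hy]
  rw [hderiv.fderiv_eq, fderiv_fun_add (hu.2.clm_apply (differentiableAt_const e))
    (hv.2.clm_apply (differentiableAt_const e))]
  rfl

theorem spaceLap_sub (hu : LapExistsAt u x) (hv : LapExistsAt v x) :
    spaceLap (fun z => u z - v z) x = spaceLap u x - spaceLap v x := by
  simp only [spaceLap, ← Finset.sum_sub_distrib]
  refine Finset.sum_congr rfl fun i _ => ?_
  set e := EuclideanSpace.single (𝕜 := ℝ) i (1 : ℝ)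
  have hderiv : (fun y => fderiv ℝ (fun z => u z - v z) y e) =ᶠ[𝓝 x]
      fun y => fderiv ℝ u y e - fderiv ℝ v y e := by
    filter_upwards [fderiv_sub_eventuallyEq hu hv] with y hy using by simp [hy]
  rw [hderiv.fderiv_eq, fderiv_fun_sub (hu.2.clm_apply (differentiableAt_const e))
    (hv.2.clm_apply (differentiableAt_const e))]
  rfl

end Laplacian

theorem stmt15_general {d : ℕ}
    (c a : EuclideanSpace ℝ (Fin d) → ℝ)
    (c₀ : ℝ) (hc₀ : c₀ ≠ 0)
    (p v r s : EuclideanSpace ℝ (Fin d) × ℝ → ℝ)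
    (x₀ : EuclideanSpace ℝ (Fin d)) (t₀ : ℝ)
    (hp_t : TwiceDiffAtTime p x₀ t₀) (hv_t : TwiceDiffAtTime v x₀ t₀)
    (hr_t : TwiceDiffAtTime r x₀ t₀)
    (hp_x : LapExistsAt (fun z => p (z, t₀)) x₀)
    (hv_x : LapExistsAt (fun z => v (z, t₀)) x₀)
    (hr_x : LapExistsAt (fun z => r (z, t₀)) x₀)
    (hv : timeDeriv2 v x₀ t₀ = (1 - c₀ ^ 2 / c x₀ ^ 2) * timeDeriv2 p x₀ t₀)
    (hr : ∀ᶠ t in nhds t₀, timeDeriv r x₀ t = c₀ ^ 2 * a x₀ * p (x₀, t))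
    (w : EuclideanSpace ℝ (Fin d) × ℝ → ℝ)
    (hw : w = fun q => p q - v q + r q) :
    (c x₀ ^ 2)⁻¹ * timeDeriv2 p x₀ t₀ + a x₀ * timeDeriv p x₀ t₀
        - spaceLap (fun z => p (z, t₀)) x₀ = s (x₀, t₀) ↔
      timeDeriv2 w x₀ t₀ - c₀ ^ 2 * spaceLap (fun z => w (z, t₀)) x₀ =
        c₀ ^ 2 * s (x₀, t₀) + c₀ ^ 2 * spaceLap (fun z => v (z, t₀)) x₀
          - c₀ ^ 2 * spaceLap (fun z => r (z, t₀)) x₀ := by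
  have hw_tt : timeDeriv2 w x₀ t₀ =
      timeDeriv2 p x₀ t₀ - timeDeriv2 v x₀ t₀ + timeDeriv2 r x₀ t₀ := by
    rw [hw, timeDeriv2_add (hp_t.sub hv_t) hr_t, timeDeriv2_sub hp_t hv_t]
  have hw_lap : spaceLap (fun z => w (z, t₀)) x₀ = spaceLap (fun z => p (z, t₀)) x₀
      - spaceLap (fun z => v (z, t₀)) x₀ + spaceLap (fun z => r (z, t₀)) x₀ := by
    rw [hw, spaceLap_add (hp_x.sub hv_x) hr_x, spaceLap_sub hp_x hv_x]
  have hr_tt : timeDeriv2 r x₀ t₀ = c₀ ^ 2 * a x₀ * timeDeriv p x₀ t₀ :=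
    timeDeriv2_eq_of_timeDeriv_eventuallyEq_const_mul _ hp_t.1.self_of_nhds hr
  have hwave : timeDeriv2 w x₀ t₀ - c₀ ^ 2 * spaceLap (fun z => w (z, t₀)) x₀ =
      c₀ ^ 2 * ((c x₀ ^ 2)⁻¹ * timeDeriv2 p x₀ t₀ + a x₀ * timeDeriv p x₀ t₀
        - spaceLap (fun z => p (z, t₀)) x₀) + c₀ ^ 2 * spaceLap (fun z => v (z, t₀)) x₀
          - c₀ ^ 2 * spaceLap (fun z => r (z, t₀)) x₀ := by
    rw [hw_tt, hw_lap, hv, hr_tt]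
    ring
  rw [hwave, sub_left_inj, add_left_inj, mul_right_inj' (pow_ne_zero 2 hc₀)]

/-- equivalence between the damped wave equation and the auxiliary
constant-speed system underlying the k-space method. With `w = p − v + r`, under the
differentiability hypotheses (i), the relation (ii) `v_tt = (1 − c₀²/c²) p_tt` at `t₀`,
and the relation (iii) `r_t = c₀² a p` near `t₀`, the damped wave equation
`c⁻² p_tt + a p_t − Δp = s` at `(x₀, t₀)` holds if and only if
`w_tt − c₀² Δw = c₀² s + c₀² Δv − c₀² Δr` at `(x₀, t₀)`. -/
theorem stmt15 {d : ℕ} (hd : 1 ≤ d)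
    (c a : EuclideanSpace ℝ (Fin d) → ℝ) (hc : ∀ x, c x ≠ 0)
    (c₀ : ℝ) (hc₀ : c₀ ≠ 0)
    (p v r s : EuclideanSpace ℝ (Fin d) × ℝ → ℝ)
    (x₀ : EuclideanSpace ℝ (Fin d)) (t₀ : ℝ)
    (hp_t : TwiceDiffAtTime p x₀ t₀) (hv_t : TwiceDiffAtTime v x₀ t₀)
    (hr_t : TwiceDiffAtTime r x₀ t₀)
    (hp_x : LapExistsAt (fun z => p (z, t₀)) x₀)
    (hv_x : LapExistsAt (fun z => v (z, t₀)) x₀)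
    (hr_x : LapExistsAt (fun z => r (z, t₀)) x₀)
    (hv : timeDeriv2 v x₀ t₀ = (1 - c₀ ^ 2 / c x₀ ^ 2) * timeDeriv2 p x₀ t₀)
    (hr : ∀ᶠ t in nhds t₀, timeDeriv r x₀ t = c₀ ^ 2 * a x₀ * p (x₀, t))
    (w : EuclideanSpace ℝ (Fin d) × ℝ → ℝ)
    (hw : w = fun q => p q - v q + r q) :
    (c x₀ ^ 2)⁻¹ * timeDeriv2 p x₀ t₀ + a x₀ * timeDeriv p x₀ t₀
        - spaceLap (fun z => p (z, t₀)) x₀ = s (x₀, t₀) ↔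
      timeDeriv2 w x₀ t₀ - c₀ ^ 2 * spaceLap (fun z => w (z, t₀)) x₀ =
        c₀ ^ 2 * s (x₀, t₀) + c₀ ^ 2 * spaceLap (fun z => v (z, t₀)) x₀
          - c₀ ^ 2 * spaceLap (fun z => r (z, t₀)) x₀ :=
  stmt15_general c a c₀ hc₀ p v r s x₀ t₀ hp_t hv_t hr_t hp_x hv_x hr_x hv hr w hw
end
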